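/- Let J be an m-primary ideal and I ⊆ m an ideal of positive height in R. Let T = B(I) ⊆ R[t, t^{-1}], let M be the ideal of T generated by t^{-1}, J and {a t : a ∈ I}, and set K = J² + I, H = J + I. Then for all integers r > j ≥ 0, the homogeneous ideal M^{2(r−j)} decomposes by degree as follows: for every n ∈ ℤ and a ∈ R, one has a·t^n ∈ M^{2(r−j)} if and only if a ∈ C_n, where (with the conventions I^e = R and K^e = R for e ≤ 0): C_n = I^n if |n| ≥ 2r; C_n = I^n · K^{i−j} if |n| = 2r − 2i with 1 ≤ i ≤ r−1; C_n = I^n if |n| = 2r − 2i − 1 with 0 ≤ i ≤ j−1; C_n = I^n · H · K^{i−j} if |n| = 2r − 2i − 1 with j ≤ i ≤ r−1; and C_0 = K^{r−j}. -/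

import Mathlib

open Filter IsLocalRing

set_option maxHeartbeats 1000000
set_option synthInstance.maxHeartbeats 1000000

noncomputable section

/-- The length of an `R`-module `M`: the Krull dimension of its lattice of submodules,
i.e. the supremum of the lengths of chains of submodules of `M`. -/
def moduleLength (R M : Type*) [CommRing R] [AddCommGroup M] [Module R M] : WithBot ℕ∞ :=
  Order.krullDim (Submodule R M)

/-- For ideals `I, I'` of `R`, the subquotient `I / (I ∩ I')` (equal to `I/I'` when `I' ≤ I`),
as an `R`-module. -/
abbrev idealSubquot {R : Type*} [CommRing R] (I I' : Ideal R) : Type _ :=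
  I ⧸ (Submodule.comap I.subtype I')

/-- `IsMixedMult J q e` says that `e` is the mixed multiplicity
`e((J 0) ^ [q 0 + 1] | (J 1) ^ [q 1] | ⋯ | (J k) ^ [q k])` of the family of ideals `J`, in the
sense of Bhattacharya–Teissier–Rees: there is a polynomial `P` with rational coefficients such
that `P (r 0, …, r k) = ℓ ((J 0)^{r 0} ⋯ (J k)^{r k} / (J 0)^{r 0 + 1} (J 1)^{r 1} ⋯ (J k)^{r k})`
for all sufficiently large `r 0, …, r k`, and `e` equals `(q 0)! ⋯ (q k)!` times the coefficient
of `x 0 ^ (q 0) ⋯ x k ^ (q k)` in `P`. -/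
def IsMixedMult {R : Type*} [CommRing R] {k : ℕ} (J : Fin (k + 1) → Ideal R)
    (q : Fin (k + 1) → ℕ) (e : ℚ) : Prop :=
  ∃ P : MvPolynomial (Fin (k + 1)) ℚ,
    (∃ N : ℕ, ∀ r : Fin (k + 1) → ℕ, (∀ i, N ≤ r i) → ∃ n : ℕ,
        moduleLength R (idealSubquot (∏ i, J i ^ r i) (J 0 * ∏ i, J i ^ r i)) = (n : ℕ∞) ∧
        (n : ℚ) = MvPolynomial.eval (fun i => (r i : ℚ)) P) ∧
    e = (∏ i, (q i).factorial : ℕ) *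
        MvPolynomial.coeff (Finsupp.equivFunOnFinite.symm q) P

/-- `IsHSMult A J e` says that `e` is the Hilbert–Samuel multiplicity of the (primary) ideal `J`
in the ring `A` of Krull dimension `D`: `e` is `D !` times the leading coefficient of the
polynomial `Q` of degree `D` with `Q r = ℓ (A / J ^ (r+1))` for all large `r`. -/
def IsHSMult (A : Type*) [CommRing A] (J : Ideal A) (e : ℚ) : Prop :=
  ∃ (D : ℕ) (Q : Polynomial ℚ), ringKrullDim A = D ∧
    (∃ N : ℕ, ∀ r : ℕ, N ≤ r → ∃ n : ℕ,
        moduleLength A (A ⧸ J ^ (r + 1)) = (n : ℕ∞) ∧ (n : ℚ) = Q.eval (r : ℚ)) ∧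
    e = (D.factorial : ℚ) * Q.coeff D

/-- An ideal has positive height if it is contained in no minimal prime of the ring. -/
def PosHeight {R : Type*} [CommRing R] (I : Ideal R) : Prop :=
  ∀ p ∈ minimalPrimes R, ¬ I ≤ p

/-- The extended Rees algebra `B(I) = ⊕ₙ Iⁿ tⁿ ⊆ R[t, t⁻¹]`: the `R`-subalgebra of the Laurent
polynomial ring generated by `t⁻¹` and the elements `a * t` for `a ∈ I`. -/
def extRees (R : Type*) [CommRing R] (I : Ideal R) : Subalgebra R (LaurentPolynomial R) :=
  Algebra.adjoin R ({LaurentPolynomial.T (-1)} ∪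
    ((fun a => LaurentPolynomial.C a * LaurentPolynomial.T 1) '' (I : Set R)))

/-- The ideal of the extended Rees algebra `B(I)` generated by `t⁻¹`, the elements of `J`, and
the elements `a * t` for `a ∈ I`.  For `J = m` this is the maximal homogeneous ideal `N(I)`. -/
def extReesIdeal (R : Type*) [CommRing R] (I J : Ideal R) : Ideal (extRees R I) :=
  Ideal.span {x : extRees R I | (x : LaurentPolynomial R) ∈
    ({LaurentPolynomial.T (-1)} ∪ (⇑LaurentPolynomial.C '' (J : Set R)) ∪
      ((fun a => LaurentPolynomial.C a * LaurentPolynomial.T 1) '' (I : Set R)))}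

/-- `I^n` for an integer `n`, with the convention `I^n = R` for `n ≤ 0`. -/
def zpowIdeal {R : Type*} [CommRing R] (I : Ideal R) (n : ℤ) : Ideal R :=
  if 0 < n then I ^ n.toNat else ⊤

/-- `a · tⁿ` belongs to the (homogeneous) ideal `𝓐` of the extended Rees algebra `B(I)`. -/
def memExtRees {R : Type*} [CommRing R] {I : Ideal R} (𝓐 : Ideal (extRees R I))
    (n : ℤ) (a : R) : Prop :=
  ∃ y ∈ 𝓐, (y : LaurentPolynomial R) = LaurentPolynomial.C a * LaurentPolynomial.T n

/-!
The generators `t⁻¹`, `J`, `It` of `M` are monomials, so `M^s` is homogeneous and its components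
obey `[M^{s+1}]ₙ = I [M^s]ₙ₋₁ + J [M^s]ₙ + [M^s]ₙ₊₁`. This recursion is solved by
`[M^s]ₙ = Iⁿ S(s - |n|)`, where `S(c) = ∑_{2p+q ≥ c} Iᵖ J^q`, so that `S(2w) = Kʷ` and
`S(2w + 1) = H Kʷ`. The inclusion `M^s ⊆ ⊕ₙ Iⁿ S(s - |n|) tⁿ` is checked on coefficients of Laurent
polynomials, the reverse one by exhibiting `a tⁿ` as a product of generators; the five cases of the
theorem are the values of `S` at `2(r - j) - |n|`.
-/

open LaurentPolynomial

section

variable {R : Type*} [CommRing R]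

theorem zpowIdeal_eq_pow_toNat (I : Ideal R) (n : ℤ) : zpowIdeal I n = I ^ n.toNat := by
  unfold zpowIdeal
  split_ifs with hn
  · rfl
  · rw [Int.toNat_of_nonpos (not_lt.1 hn), pow_zero, Ideal.one_eq_top]

section weightedPow

variable (I J : Ideal R)

/-- The ideal `S(c) = ∑_{2p+q ≥ c} Iᵖ J^q`. -/
def weightedPow : ℕ → Ideal R
  | 0 => ⊤
  | 1 => J ⊔ I
  | c + 2 => (J ^ 2 ⊔ I) * weightedPow c

@[simp]
theorem weightedPow_zero : weightedPow I J 0 = ⊤ := by rw [weightedPow]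

theorem weightedPow_one : weightedPow I J 1 = J ⊔ I := by rw [weightedPow]

theorem weightedPow_add_two (c : ℕ) :
    weightedPow I J (c + 2) = (J ^ 2 ⊔ I) * weightedPow I J c := by
  rw [weightedPow]

theorem weightedPow_two_mul (w : ℕ) : weightedPow I J (2 * w) = (J ^ 2 ⊔ I) ^ w := by
  induction w with
  | zero => rw [weightedPow_zero, pow_zero, Ideal.one_eq_top]
  | succ w ih => rw [Nat.mul_succ, weightedPow_add_two, ih, ← pow_succ']

theorem weightedPow_two_mul_add_one (w : ℕ) :
    weightedPow I J (2 * w + 1) = (J ⊔ I) * (J ^ 2 ⊔ I) ^ w := by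
  induction w with
  | zero => rw [Nat.mul_zero, weightedPow_one, pow_zero, mul_one]
  | succ w ih =>
    rw [show 2 * (w + 1) + 1 = 2 * w + 1 + 2 by ring, weightedPow_add_two, ih, mul_left_comm,
      ← pow_succ']

theorem weightedPow_succ_le : ∀ c, weightedPow I J (c + 1) ≤ weightedPow I J c
  | 0 => le_top
  | 1 => by
    rw [weightedPow_add_two, weightedPow_zero, Ideal.mul_top, weightedPow_one]
    exact sup_le_sup_right (Ideal.pow_le_self two_ne_zero) I
  | c + 2 => by
    rw [weightedPow_add_two, weightedPow_add_two]
    exact Ideal.mul_mono_right (weightedPow_succ_le c)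

theorem weightedPow_antitone : Antitone (weightedPow I J) :=
  antitone_nat_of_succ_le (weightedPow_succ_le I J)

theorem mul_weightedPow_le_add_two (c : ℕ) : I * weightedPow I J c ≤ weightedPow I J (c + 2) :=
  (weightedPow_add_two I J c).symm ▸ Ideal.mul_mono_left le_sup_right

theorem mul_weightedPow_le_succ : ∀ c, J * weightedPow I J c ≤ weightedPow I J (c + 1)
  | 0 => by rw [weightedPow_zero, Ideal.mul_top, weightedPow_one]; exact le_sup_left
  | 1 => by
    rw [weightedPow_add_two, weightedPow_zero, Ideal.mul_top, weightedPow_one, Ideal.mul_sup,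
      ← pow_two]
    exact sup_le_sup_left Ideal.mul_le_right _
  | c + 2 => by
    rw [weightedPow_add_two, weightedPow_add_two, mul_left_comm]
    exact Ideal.mul_mono_right (mul_weightedPow_le_succ c)

theorem weightedPow_succ_le_sup :
    ∀ c, weightedPow I J (c + 1) ≤ I * weightedPow I J (c - 1) ⊔ J * weightedPow I J c
  | 0 => by
    rw [weightedPow_one, Nat.zero_sub, weightedPow_zero, Ideal.mul_top, Ideal.mul_top, sup_comm]
  | 1 => by
    rw [weightedPow_add_two, Nat.sub_self, weightedPow_zero, Ideal.mul_top, Ideal.mul_top]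
    exact sup_le (le_sup_of_le_right (pow_two J ▸ Ideal.mul_mono_right le_sup_left)) le_sup_left
  | 2 => by
    rw [weightedPow_add_two, weightedPow_one, Ideal.sup_mul, pow_two, mul_assoc]
    refine sup_le (le_sup_of_le_right (Ideal.mul_mono_right ?_)) le_sup_left
    simpa [weightedPow_one] using mul_weightedPow_le_succ I J 1
  | c + 3 => by
    rw [weightedPow_add_two, show c + 3 - 1 = c + 2 by rfl, weightedPow_add_two,
      show c + 3 = c + 1 + 2 by rfl, weightedPow_add_two, mul_left_comm, mul_left_comm J]
    refine (Ideal.mul_mono_right (weightedPow_succ_le_sup (c + 1))).trans ?_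
    rw [Ideal.mul_sup, mul_left_comm, mul_left_comm _ J]
    rfl

end weightedPow

section powComponent

variable (I J : Ideal R)

/-- The degree-`n` component of `(t⁻¹, J, It)^s` in `B(I)`. -/
def powComponent (s : ℕ) (n : ℤ) : Ideal R :=
  I ^ n.toNat * weightedPow I J (s - n.natAbs)

theorem powComponent_zero (n : ℤ) : powComponent I J 0 n = I ^ n.toNat := by
  rw [powComponent, Nat.zero_sub, weightedPow_zero, Ideal.mul_top]

theorem mul_powComponent_le (s : ℕ) (n : ℤ) :
    I * powComponent I J s n ≤ powComponent I J s (n + 1) := by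
  rcases le_or_gt 0 n with hn | hn
  · rw [powComponent, powComponent, ← mul_assoc, ← pow_succ', show (n + 1).toNat = n.toNat + 1
      by omega]
    exact Ideal.mul_mono_right (weightedPow_antitone I J (by omega))
  · rw [powComponent, powComponent, show (n + 1).toNat = n.toNat by omega, mul_left_comm]
    exact Ideal.mul_mono_right
      ((mul_weightedPow_le_add_two I J _).trans (weightedPow_antitone I J (by omega)))

theorem powComponent_le_sub_one (s : ℕ) (n : ℤ) :
    powComponent I J s n ≤ powComponent I J s (n - 1) := by
  rcases le_or_gt n 0 with hn | hn
  · rw [powComponent, powComponent, show (n - 1).toNat = n.toNat by omega]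
    exact Ideal.mul_mono_right (weightedPow_antitone I J (by omega))
  · rw [powComponent, powComponent, show n.toNat = (n - 1).toNat + 1 by omega, pow_succ,
      mul_assoc]
    exact Ideal.mul_mono_right
      ((mul_weightedPow_le_add_two I J _).trans (weightedPow_antitone I J (by omega)))

theorem pow_toNat_mul_powComponent_le (s : ℕ) (k l : ℤ) :
    I ^ k.toNat * powComponent I J s l ≤ powComponent I J s (k + l) := by
  induction k using Int.induction_on with
  | zero => rw [Int.toNat_zero, pow_zero, one_mul, zero_add]
  | succ k ih =>
    rw [show ((k : ℤ) + 1).toNat = (k : ℤ).toNat + 1 by omega, pow_succ', mul_assoc,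
      add_right_comm]
    exact (Ideal.mul_mono_right ih).trans (mul_powComponent_le I J s _)
  | pred k ih =>
    rw [show (-(k : ℤ) - 1).toNat = (-(k : ℤ)).toNat by omega, sub_add_eq_add_sub]
    exact ih.trans (powComponent_le_sub_one I J s _)

theorem powComponent_add_one_le (s : ℕ) (n : ℤ) :
    powComponent I J s (n + 1) ≤ powComponent I J (s + 1) n := by
  rcases le_or_gt 0 n with hn | hn
  · rw [powComponent, powComponent, show (n + 1).toNat = n.toNat + 1 by omega, pow_succ,
      mul_assoc]
    exact Ideal.mul_mono_right
      ((mul_weightedPow_le_add_two I J _).trans (weightedPow_antitone I J (by omega)))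
  · rw [powComponent, powComponent, show (n + 1).toNat = n.toNat by omega]
    exact Ideal.mul_mono_right (weightedPow_antitone I J (by omega))

theorem mul_powComponent_le_succ (s : ℕ) (n : ℤ) :
    J * powComponent I J s n ≤ powComponent I J (s + 1) n := by
  rw [powComponent, powComponent, mul_left_comm]
  exact Ideal.mul_mono_right
    ((mul_weightedPow_le_succ I J _).trans (weightedPow_antitone I J (by omega)))

theorem mul_powComponent_sub_one_le (s : ℕ) (n : ℤ) :
    I * powComponent I J s (n - 1) ≤ powComponent I J (s + 1) n := by
  rcases le_or_gt n 0 with hn | hn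
  · rw [powComponent, powComponent, show (n - 1).toNat = n.toNat by omega, mul_left_comm]
    exact Ideal.mul_mono_right
      ((mul_weightedPow_le_add_two I J _).trans (weightedPow_antitone I J (by omega)))
  · rw [powComponent, powComponent, ← mul_assoc, ← pow_succ',
      show (n - 1).toNat + 1 = n.toNat by omega]
    exact Ideal.mul_mono_right (weightedPow_antitone I J (by omega))

theorem powComponent_succ_le (s : ℕ) (n : ℤ) :
    powComponent I J (s + 1) n ≤
      I * powComponent I J s (n - 1) ⊔ J * powComponent I J s n ⊔ powComponent I J s (n + 1) := by
  rcases lt_trichotomy n 0 with hn | rfl | hn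
  · refine le_sup_of_le_right ?_
    rw [powComponent, powComponent, show (n + 1).toNat = n.toNat by omega]
    exact Ideal.mul_mono_right (weightedPow_antitone I J (by omega))
  · refine le_sup_of_le_left ?_
    simpa [powComponent] using weightedPow_succ_le_sup I J s
  · refine le_sup_of_le_left (le_sup_of_le_left ?_)
    rw [powComponent, powComponent, ← mul_assoc, ← pow_succ',
      show (n - 1).toNat + 1 = n.toNat by omega]
    exact Ideal.mul_mono_right (weightedPow_antitone I J (by omega))

end powComponent

section extRees

variable {I : Ideal R}

theorem coeff_C_mul_T_mem {P : ℤ → Ideal R} {a : R} {k : ℤ} (ha : a ∈ P k) (n : ℤ) :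
    (C a * T k : LaurentPolynomial R).coeff n ∈ P n := by
  rw [← single_eq_C_mul_T, AddMonoidAlgebra.coeff_single, Finsupp.single_apply]
  split_ifs with hkn
  · exact hkn ▸ ha
  · exact zero_mem _

theorem coeff_mul_mem {P Q : ℤ → Ideal R} (hPQ : ∀ k l, P k * Q l ≤ Q (k + l))
    {f g : LaurentPolynomial R} (hf : ∀ k, f.coeff k ∈ P k) (hg : ∀ k, g.coeff k ∈ Q k)
    (n : ℤ) : (f * g).coeff n ∈ Q n := by
  rw [AddMonoidAlgebra.coeff_mul_apply_left]
  refine Submodule.finsuppSum_mem _ _ _ _ fun k _ => ?_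
  simpa using hPQ k (-k + n) (Ideal.mul_mem_mul (hf k) (hg (-k + n)))

theorem coeff_mem_pow_of_mem_extRees {f : LaurentPolynomial R} (hf : f ∈ extRees R I)
    (n : ℤ) : f.coeff n ∈ I ^ n.toNat := by
  induction hf using Algebra.adjoin_induction generalizing n with
  | mem x hx =>
    rcases hx with rfl | ⟨a, ha, rfl⟩
    · simpa using coeff_C_mul_T_mem (P := fun k => I ^ k.toNat) (a := 1) (k := -1) (by simp) n
    · exact coeff_C_mul_T_mem (P := fun k => I ^ k.toNat) (k := 1) (by simpa using ha) n
  | algebraMap a =>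
    simpa using coeff_C_mul_T_mem (P := fun k => I ^ k.toNat) (a := a) (k := 0) (by simp) n
  | add f g _ _ hf hg => exact add_mem (hf n) (hg n)
  | mul f g _ _ hf hg =>
    refine coeff_mul_mem (fun k l => ?_) hf hg n
    rw [← pow_add]
    exact Ideal.pow_le_pow_right (by omega)

theorem C_mem_extRees (a : R) : C a ∈ extRees R I :=
  C_eq_algebraMap a ▸ Subalgebra.algebraMap_mem _ a

theorem T_neg_one_mem_extRees : T (-1) ∈ extRees R I :=
  Algebra.subset_adjoin (Set.mem_union_left _ rfl)

theorem C_mul_T_one_mem_extRees {a : R} (ha : a ∈ I) : C a * T 1 ∈ extRees R I :=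
  Algebra.subset_adjoin (Set.mem_union_right _ ⟨a, ha, rfl⟩)

theorem C_mul_T_natCast_mem_extRees {m : ℕ} {a : R} (ha : a ∈ I ^ m) :
    C a * T m ∈ extRees R I := by
  induction m generalizing a with
  | zero => simpa using C_mem_extRees a
  | succ m ih =>
    rw [pow_succ] at ha
    refine Submodule.mul_induction_on ha (fun x hx y hy => ?_) fun x y hx hy => ?_
    · rw [show (C (x * y) * T ((m + 1 : ℕ) : ℤ) : LaurentPolynomial R)
          = C x * T m * (C y * T 1) by push_cast; rw [map_mul, T_add]; ring]
      exact mul_mem (ih hx) (C_mul_T_one_mem_extRees hy)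
    · simpa [add_mul] using add_mem hx hy

theorem C_mul_T_mem_extRees {n : ℤ} {a : R} (ha : a ∈ I ^ n.toNat) :
    C a * T n ∈ extRees R I := by
  rcases le_or_gt n 0 with hn | hn
  · rw [show (T n : LaurentPolynomial R) = T (-1) ^ (-n).toNat by rw [T_pow]; congr 1; omega]
    exact mul_mem (C_mem_extRees a) (pow_mem T_neg_one_mem_extRees _)
  · simpa [Int.toNat_of_nonneg hn.le] using C_mul_T_natCast_mem_extRees ha

def extReesHomogeneous (P : ℤ → Ideal R) (hP : ∀ k l, I ^ k.toNat * P l ≤ P (k + l)) :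
    Ideal (extRees R I) where
  carrier := {y | ∀ n, (y : LaurentPolynomial R).coeff n ∈ P n}
  add_mem' hy hz n := by simpa using add_mem (hy n) (hz n)
  zero_mem' n := by simp
  smul_mem' c _ hy := coeff_mul_mem hP (coeff_mem_pow_of_mem_extRees c.2) hy

def extReesComponent (𝓐 : Ideal (extRees R I)) (n : ℤ) : Ideal R where
  carrier := {a | memExtRees 𝓐 n a}
  add_mem' := by
    rintro a b ⟨y, hy, hya⟩ ⟨z, hz, hzb⟩
    exact ⟨y + z, add_mem hy hz, by rw [Subalgebra.coe_add, hya, hzb, map_add, add_mul]⟩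
  zero_mem' := ⟨0, zero_mem _, by simp⟩
  smul_mem' c a := by
    rintro ⟨y, hy, hya⟩
    refine ⟨⟨C c, C_mem_extRees c⟩ * y, Ideal.mul_mem_left _ _ hy, ?_⟩
    rw [Subalgebra.coe_mul, hya, smul_eq_mul, map_mul, mul_assoc]

theorem mul_mem_extReesComponent_mul {𝓐 𝓑 : Ideal (extRees R I)} {y : extRees R I}
    (hy : y ∈ 𝓑) {b : R} {k : ℤ} (hyb : (y : LaurentPolynomial R) = C b * T k) {a : R} {n : ℤ}
    (ha : a ∈ extReesComponent 𝓐 n) : b * a ∈ extReesComponent (𝓐 * 𝓑) (n + k) := by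
  obtain ⟨x, hx, hxa⟩ := ha
  refine ⟨x * y, Ideal.mul_mem_mul hx hy, ?_⟩
  rw [Subalgebra.coe_mul, hxa, hyb, map_mul, T_add]
  ring

theorem mul_mem_extReesHomogeneous {P Q : ℤ → Ideal R}
    {hP : ∀ k l, I ^ k.toNat * P l ≤ P (k + l)} {hQ : ∀ k l, I ^ k.toNat * Q l ≤ Q (k + l)}
    {B : Ideal R} {k : ℤ} (hBk : ∀ m, B * P m ≤ Q (m + k)) {g x : extRees R I} {b : R}
    (hb : b ∈ B) (hg : (g : LaurentPolynomial R) = C b * T k)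
    (hx : x ∈ extReesHomogeneous P hP) : g * x ∈ extReesHomogeneous Q hQ := fun n => by
  rw [Subalgebra.coe_mul, hg, ← single_eq_C_mul_T, AddMonoidAlgebra.coeff_single_mul_apply]
  simpa using hBk (-k + n) (Ideal.mul_mem_mul hb (hx (-k + n)))

end extRees

section extReesIdeal

variable (I J : Ideal R)

abbrev powComponentIdeal (s : ℕ) : Ideal (extRees R I) :=
  extReesHomogeneous (powComponent I J s) (pow_toNat_mul_powComponent_le I J s)

theorem extReesIdeal_mul_powComponentIdeal_le (s : ℕ) :
    extReesIdeal R I J * powComponentIdeal I J s ≤ powComponentIdeal I J (s + 1) := by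
  refine Ideal.mul_le.2 fun g hg x hx => ?_
  induction hg using Submodule.span_induction with
  | mem g hg =>
    rcases hg with (hg | ⟨b, hb, hg⟩) | ⟨b, hb, hg⟩
    · refine mul_mem_extReesHomogeneous (B := ⊤) (fun m => ?_) (Submodule.mem_top (x := 1))
        (by simpa using hg) hx
      simpa using powComponent_add_one_le I J s (m + -1)
    · refine mul_mem_extReesHomogeneous (k := 0) (fun m => ?_) hb (by simpa using hg.symm) hx
      simpa using mul_powComponent_le_succ I J s m
    · refine mul_mem_extReesHomogeneous (fun m => ?_) hb hg.symm hx
      simpa using mul_powComponent_sub_one_le I J s (m + 1)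
  | zero => simp
  | add g h _ _ hg hh => simpa [add_mul] using add_mem hg hh
  | smul c g _ hg => simpa [mul_assoc] using Ideal.mul_mem_left _ c hg

theorem extReesIdeal_pow_le_powComponentIdeal (s : ℕ) :
    extReesIdeal R I J ^ s ≤ powComponentIdeal I J s := by
  induction s with
  | zero =>
    rw [pow_zero, Ideal.one_eq_top]
    intro y _ n
    simpa [powComponent_zero] using coeff_mem_pow_of_mem_extRees y.2 n
  | succ s ih =>
    rw [pow_succ']
    exact (Ideal.mul_mono_right ih).trans (extReesIdeal_mul_powComponentIdeal_le I J s)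

theorem powComponent_le_extReesComponent (s : ℕ) (n : ℤ) :
    powComponent I J s n ≤ extReesComponent (extReesIdeal R I J ^ s) n := by
  induction s generalizing n with
  | zero =>
    intro a ha
    rw [powComponent_zero] at ha
    exact ⟨⟨C a * T n, C_mul_T_mem_extRees ha⟩, by simp, rfl⟩
  | succ s ih =>
    refine (powComponent_succ_le I J s n).trans (sup_le (sup_le ?_ ?_) ?_) <;> rw [pow_succ]
    · refine Ideal.mul_le.2 fun b hb a ha => ?_
      have hy : (⟨C b * T 1, C_mul_T_one_mem_extRees hb⟩ : extRees R I) ∈ extReesIdeal R I J :=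
        Ideal.subset_span (Set.mem_union_right _ ⟨b, hb, rfl⟩)
      simpa using mul_mem_extReesComponent_mul hy rfl (ih (n - 1) ha)
    · refine Ideal.mul_le.2 fun b hb a ha => ?_
      have hy : (⟨C b, C_mem_extRees b⟩ : extRees R I) ∈ extReesIdeal R I J :=
        Ideal.subset_span (Set.mem_union_left _ (Set.mem_union_right _ ⟨b, hb, rfl⟩))
      simpa using mul_mem_extReesComponent_mul hy (k := 0) (by simp) (ih n ha)
    · intro a ha
      have hy : (⟨T (-1), T_neg_one_mem_extRees⟩ : extRees R I) ∈ extReesIdeal R I J :=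
        Ideal.subset_span (Set.mem_union_left _ (Set.mem_union_left _ rfl))
      have h := mul_mem_extReesComponent_mul hy (b := 1) (k := -1) (by simp) (ih (n + 1) ha)
      rwa [one_mul, add_neg_cancel_right] at h

theorem memExtRees_extReesIdeal_pow_iff (s : ℕ) (n : ℤ) (a : R) :
    memExtRees (extReesIdeal R I J ^ s) n a ↔ a ∈ powComponent I J s n := by
  refine ⟨fun ⟨y, hy, hya⟩ => ?_, fun ha => powComponent_le_extReesComponent I J s n ha⟩
  simpa [hya, ← single_eq_C_mul_T] using extReesIdeal_pow_le_powComponentIdeal I J s hy n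

end extReesIdeal

end

theorem pow_extReesIdeal_graded_components_general (R : Type*) [CommRing R] (I J : Ideal R)
    (j r : ℕ) (hjr : j < r) (n : ℤ) (a : R) :
    (2 * r ≤ n.natAbs →
      (memExtRees ((extReesIdeal R I J) ^ (2 * (r - j))) n a ↔ a ∈ zpowIdeal I n)) ∧
    (∀ i : ℕ, 1 ≤ i → i ≤ r - 1 → n.natAbs = 2 * r - 2 * i →
      (memExtRees ((extReesIdeal R I J) ^ (2 * (r - j))) n a ↔
        a ∈ zpowIdeal I n * zpowIdeal (J ^ 2 + I) ((i : ℤ) - (j : ℤ)))) ∧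
    (∀ i : ℕ, i < j → n.natAbs = 2 * r - 2 * i - 1 →
      (memExtRees ((extReesIdeal R I J) ^ (2 * (r - j))) n a ↔ a ∈ zpowIdeal I n)) ∧
    (∀ i : ℕ, j ≤ i → i ≤ r - 1 → n.natAbs = 2 * r - 2 * i - 1 →
      (memExtRees ((extReesIdeal R I J) ^ (2 * (r - j))) n a ↔
        a ∈ zpowIdeal I n * ((J + I) * zpowIdeal (J ^ 2 + I) ((i : ℤ) - (j : ℤ))))) ∧
    (n = 0 →
      (memExtRees ((extReesIdeal R I J) ^ (2 * (r - j))) n a ↔ a ∈ (J ^ 2 + I) ^ (r - j))) := by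
  simp only [memExtRees_extReesIdeal_pow_iff, powComponent, zpowIdeal_eq_pow_toNat,
    Submodule.add_eq_sup]
  refine ⟨fun hn => ?_, fun i _ _ hn => ?_, fun i _ hn => ?_, fun i _ _ hn => ?_, fun hn => ?_⟩
  · rw [Nat.sub_eq_zero_of_le (by omega), weightedPow_zero, Ideal.mul_top]
  · rw [show 2 * (r - j) - n.natAbs = 2 * (i - j) by omega, weightedPow_two_mul,
      show ((i : ℤ) - j).toNat = i - j by omega]
  · rw [Nat.sub_eq_zero_of_le (by omega), weightedPow_zero, Ideal.mul_top]
  · rw [show 2 * (r - j) - n.natAbs = 2 * (i - j) + 1 by omega, weightedPow_two_mul_add_one,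
      show ((i : ℤ) - j).toNat = i - j by omega]
  · subst hn
    rw [Int.toNat_zero, pow_zero, one_mul, Int.natAbs_zero, Nat.sub_zero, weightedPow_two_mul]

/-- Lemma 2.4: let `J` be an `m`-primary ideal and `I ⊆ m` an ideal of positive height in a
Noetherian local ring `(R, m)` of dimension `d > 0` with infinite residue field.  Put
`T = B(I)`, `M = (t⁻¹, J, It)`, `K = J² + I` and `H = J + I`.  Then for `0 ≤ j < r` the
homogeneous ideal `M^{2(r−j)}` decomposes by degree: `a tⁿ ∈ M^{2(r−j)}` iff `a ∈ Cₙ`, where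
(with `Iᵉ = Kᵉ = R` for `e ≤ 0`): `Cₙ = Iⁿ` if `|n| ≥ 2r`; `Cₙ = Iⁿ K^{i−j}` if
`|n| = 2r − 2i` with `1 ≤ i ≤ r − 1`; `Cₙ = Iⁿ` if `|n| = 2r − 2i − 1` with `0 ≤ i ≤ j − 1`;
`Cₙ = Iⁿ H K^{i−j}` if `|n| = 2r − 2i − 1` with `j ≤ i ≤ r − 1`; and `C₀ = K^{r−j}`. -/
theorem pow_extReesIdeal_graded_components (R : Type*) [CommRing R] [IsNoetherianRing R]
    [IsLocalRing R] [Infinite (ResidueField R)] (d : ℕ) (hd : 0 < d)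
    (hdim : ringKrullDim R = d) (I J : Ideal R) (hJ : J.radical = maximalIdeal R)
    (hIm : I ≤ maximalIdeal R) (hI : PosHeight I)
    (j r : ℕ) (hjr : j < r) (n : ℤ) (a : R) :
    (2 * r ≤ n.natAbs →
      (memExtRees ((extReesIdeal R I J) ^ (2 * (r - j))) n a ↔ a ∈ zpowIdeal I n)) ∧
    (∀ i : ℕ, 1 ≤ i → i ≤ r - 1 → n.natAbs = 2 * r - 2 * i →
      (memExtRees ((extReesIdeal R I J) ^ (2 * (r - j))) n a ↔
        a ∈ zpowIdeal I n * zpowIdeal (J ^ 2 + I) ((i : ℤ) - (j : ℤ)))) ∧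
    (∀ i : ℕ, i < j → n.natAbs = 2 * r - 2 * i - 1 →
      (memExtRees ((extReesIdeal R I J) ^ (2 * (r - j))) n a ↔ a ∈ zpowIdeal I n)) ∧
    (∀ i : ℕ, j ≤ i → i ≤ r - 1 → n.natAbs = 2 * r - 2 * i - 1 →
      (memExtRees ((extReesIdeal R I J) ^ (2 * (r - j))) n a ↔
        a ∈ zpowIdeal I n * ((J + I) * zpowIdeal (J ^ 2 + I) ((i : ℤ) - (j : ℤ))))) ∧
    (n = 0 →
      (memExtRees ((extReesIdeal R I J) ^ (2 * (r - j))) n a ↔ a ∈ (J ^ 2 + I) ^ (r - j))) :=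
  pow_extReesIdeal_graded_components_general R I J j r hjr n a
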